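/- The market satisfies AIP if and only if, for every t < T, m(S_{t+1}|𝓕_t) ≤ S_t ≤ M(S_{t+1}|𝓕_t) P-a.s. Moreover, these conditions are also equivalent to: m(S_u|𝓕_t) ≤ S_t ≤ M(S_u|𝓕_t) P-a.s. for all 0 ≤ t ≤ u ≤ T. -/

import Mathlib

/-!
If AIP holds, holding one unit of the asset from `t` to `u` (long or short) produces the terminal
values `±(S_u - S_t)`, whose conditional essential infima `m(S_u|𝓕_t) - S_t` and
`S_t - M(S_u|𝓕_t)` must therefore be nonpositive.

Conversely, the one-step condition gives AIP by backward induction on `t`. If an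
`𝓕_t`-measurable `Y` lies below the terminal value `θ_t (S_{t+1} - S_t) + V_{t+1}` of `θ` from
`t`, induction gives `Y ≤ θ_t (S_{t+1} - S_t)`. On `{θ_t > 0}`, `Y / θ_t + S_t` is then an
`𝓕_t`-measurable lower bound of `S_{t+1}`, hence lies below `m(S_{t+1}|𝓕_t) ≤ S_t`, so `Y ≤ 0`;
on `{θ_t < 0}` argue symmetrically with `M(S_{t+1}|𝓕_t)`.

This needs conditional essential suprema to exist. `M(X|𝓗)` is obtained as a minimiser of `∫ Z`
over the bounded `𝓗`-measurable majorants `Z` of `X`, a family closed under countable infima.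
-/

open MeasureTheory Filter

/-- A real random variable is essentially bounded w.r.t. the measure `P`. -/
def EssBdd {Ω : Type*} {F : MeasurableSpace Ω} (P : @Measure Ω F) (X : Ω → ℝ) : Prop :=
  ∃ C : ℝ, ∀ᵐ ω ∂P, |X ω| ≤ C

/-- `Y` is the conditional essential supremum `M(X|H)` of `X` given the sub-σ-algebra `H`:
`Y` is `H`-measurable, essentially bounded, `X ≤ Y` a.s., and `Y` is a.s. below every
`H`-measurable `Z` with `X ≤ Z` a.s. -/
def IsCondEssSup {Ω : Type*} {F : MeasurableSpace Ω} (P : @Measure Ω F)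
    (H : MeasurableSpace Ω) (X Y : Ω → ℝ) : Prop :=
  Measurable[H] Y ∧ EssBdd P Y ∧ (∀ᵐ ω ∂P, X ω ≤ Y ω) ∧
    ∀ Z : Ω → ℝ, Measurable[H] Z → (∀ᵐ ω ∂P, X ω ≤ Z ω) → ∀ᵐ ω ∂P, Y ω ≤ Z ω

/-- `Y` is the conditional essential infimum `m(X|H) = -M(-X|H)`. -/
def IsCondEssInf {Ω : Type*} {F : MeasurableSpace Ω} (P : @Measure Ω F)
    (H : MeasurableSpace Ω) (X Y : Ω → ℝ) : Prop :=
  IsCondEssSup P H (fun ω => -X ω) (fun ω => -Y ω)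

/-- The terminal value `∑_{u=t}^{T-1} θ_u (S_{u+1} − S_u)` of the elementary portfolio `θ`
starting at time `t` with zero initial capital. -/
def PortfolioValue (Ω : Type*) (S θ : ℕ → Ω → ℝ) (t T : ℕ) : Ω → ℝ :=
  fun ω => ∑ u ∈ Finset.Ico t T, θ u ω * (S (u + 1) ω - S u ω)

/-- A trading strategy is admissible if at each time `u` it is `𝓕ᵤ`-measurable and
essentially bounded. -/
def IsStrategy {Ω : Type*} {F : MeasurableSpace Ω} (P : @Measure Ω F)
    (𝓕 : ℕ → MeasurableSpace Ω) (θ : ℕ → Ω → ℝ) : Prop :=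
  ∀ u, Measurable[𝓕 u] (θ u) ∧ EssBdd P (θ u)

/-- Absence of Immediate Profit: for every `t < T` and every admissible strategy, the
conditional essential infimum at time `t` of the associated terminal portfolio value is
nonpositive a.s. -/
def AIP {Ω : Type*} {F : MeasurableSpace Ω} (P : @Measure Ω F)
    (𝓕 : ℕ → MeasurableSpace Ω) (S : ℕ → Ω → ℝ) (T : ℕ) : Prop :=
  ∀ t, t < T → ∀ θ : ℕ → Ω → ℝ, IsStrategy P 𝓕 θ →
    ∀ mv : Ω → ℝ, IsCondEssInf P (𝓕 t) (PortfolioValue Ω S θ t T) mv →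
      ∀ᵐ ω ∂P, mv ω ≤ 0

/-- No Arbitrage: every nonnegative terminal portfolio value obtained from zero initial
capital vanishes a.s. -/
def NA {Ω : Type*} {F : MeasurableSpace Ω} (P : @Measure Ω F)
    (𝓕 : ℕ → MeasurableSpace Ω) (S : ℕ → Ω → ℝ) (T : ℕ) : Prop :=
  ∀ t, t < T → ∀ θ : ℕ → Ω → ℝ, IsStrategy P 𝓕 θ →
    (∀ᵐ ω ∂P, 0 ≤ PortfolioValue Ω S θ t T ω) →
      PortfolioValue Ω S θ t T =ᵐ[P] fun _ => (0 : ℝ)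

section CondEssSup

variable {Ω : Type*} {F : MeasurableSpace Ω} {P : @Measure Ω F} {H : MeasurableSpace Ω}
  {X Y g : Ω → ℝ}

lemma EssBdd.neg (hX : EssBdd P X) : EssBdd P (fun ω => -X ω) := by
  obtain ⟨C, hC⟩ := hX
  exact ⟨C, hC.mono fun ω h => by rwa [abs_neg]⟩

lemma EssBdd.add (hX : EssBdd P X) (hY : EssBdd P Y) : EssBdd P (fun ω => X ω + Y ω) := by
  obtain ⟨C, hC⟩ := hX
  obtain ⟨D, hD⟩ := hY
  exact ⟨C + D, by filter_upwards [hC, hD] with ω h1 h2 using (abs_add_le _ _).trans (by linarith)⟩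

lemma IsCondEssInf.measurable (h : IsCondEssInf P H X Y) : Measurable[H] Y := by
  simpa only [Pi.neg_def, neg_neg] using h.1.neg

lemma IsCondEssInf.ae_le (h : IsCondEssInf P H X Y) : ∀ᵐ ω ∂P, Y ω ≤ X ω :=
  h.2.2.1.mono fun _ h => neg_le_neg_iff.1 h

lemma IsCondEssInf.ae_le_of_ae_le (h : IsCondEssInf P H X Y) {Z : Ω → ℝ} (hZ : Measurable[H] Z)
    (hZX : ∀ᵐ ω ∂P, Z ω ≤ X ω) : ∀ᵐ ω ∂P, Z ω ≤ Y ω :=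
  (h.2.2.2 _ hZ.neg (hZX.mono fun _ h => neg_le_neg h)).mono fun _ h => neg_le_neg_iff.1 h

lemma IsCondEssSup.neg (h : IsCondEssSup P H X Y) :
    IsCondEssInf P H (fun ω => -X ω) (fun ω => -Y ω) := by
  simpa only [IsCondEssInf, neg_neg] using h

lemma IsCondEssSup.add_right (h : IsCondEssSup P H X Y) (hg : Measurable[H] g)
    (hgb : EssBdd P g) : IsCondEssSup P H (fun ω => X ω + g ω) (fun ω => Y ω + g ω) := by
  obtain ⟨hY, hYb, hXY, hmin⟩ := h
  refine ⟨hY.add hg, hYb.add hgb, hXY.mono fun ω h => by linarith, fun Z hZ hXZ => ?_⟩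
  filter_upwards [hmin (fun ω => Z ω - g ω) (hZ.sub hg) (hXZ.mono fun ω h => by linarith)]
    with ω h
  linarith

lemma IsCondEssInf.add_right (h : IsCondEssInf P H X Y) (hg : Measurable[H] g)
    (hgb : EssBdd P g) : IsCondEssInf P H (fun ω => X ω + g ω) (fun ω => Y ω + g ω) := by
  simpa only [IsCondEssInf, neg_add] using
    IsCondEssSup.add_right (g := fun ω => -g ω) h hg.neg hgb.neg

lemma exists_mem_forall_integral_le {U : Set (Ω → ℝ)} {c : ℝ} (hne : U.Nonempty)
    (hint : ∀ Z ∈ U, Integrable Z P) (hbdd : BddBelow ((fun Z => ∫ ω, Z ω ∂P) '' U))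
    (hlb : ∀ Z ∈ U, ∀ ω, c ≤ Z ω)
    (hinf : ∀ g : ℕ → Ω → ℝ, (∀ n, g n ∈ U) → (fun ω => ⨅ n, g n ω) ∈ U) :
    ∃ Y ∈ U, ∀ Z ∈ U, ∫ ω, Y ω ∂P ≤ ∫ ω, Z ω ∂P := by
  obtain ⟨g, -, hlim, hgU⟩ := exists_seq_tendsto_sInf (hne.image _) hbdd
  choose Z hZU hZg using hgU
  have hYU := hinf Z hZU
  refine ⟨_, hYU, fun W hW => ?_⟩
  have hYZ : ∀ n, ∫ ω, ⨅ k, Z k ω ∂P ≤ g n := fun n => by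
    rw [← hZg n]
    refine integral_mono (hint _ hYU) (hint _ (hZU n)) fun ω => ciInf_le ?_ n
    exact ⟨c, by rintro _ ⟨k, rfl⟩; exact hlb _ (hZU k) ω⟩
  exact (ge_of_tendsto' hlim hYZ).trans (csInf_le hbdd ⟨W, hW, rfl⟩)

theorem exists_isCondEssSup [IsFiniteMeasure P] (hH : H ≤ F) (hX : EssBdd P X) :
    ∃ Y, IsCondEssSup P H X Y := by
  obtain ⟨C₀, hC₀⟩ := hX
  set C := |C₀|
  have hXC : ∀ᵐ ω ∂P, |X ω| ≤ C := hC₀.mono fun _ h => h.trans (le_abs_self _)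
  set U : Set (Ω → ℝ) := {Z | Measurable[H] Z ∧ (∀ ω, |Z ω| ≤ C) ∧ ∀ᵐ ω ∂P, X ω ≤ Z ω}
  have hint : ∀ Z ∈ U, Integrable Z P := fun Z hZ =>
    .of_bound (hZ.1.mono hH le_rfl).aestronglyMeasurable C (ae_of_all _ hZ.2.1)
  have hlb : ∀ Z ∈ U, ∀ ω, -C ≤ Z ω := fun Z hZ ω => neg_le_of_abs_le (hZ.2.1 ω)
  have hCU : (fun _ => C) ∈ U :=
    ⟨measurable_const, fun _ => (abs_abs C₀).le, hXC.mono fun _ h => (abs_le.1 h).2⟩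
  have hbdd : BddBelow ((fun Z => ∫ ω, Z ω ∂P) '' U) := by
    refine ⟨∫ _, -C ∂P, ?_⟩
    rintro _ ⟨Z, hZ, rfl⟩
    exact integral_mono (integrable_const _) (hint Z hZ) (hlb Z hZ)
  have hinf : ∀ g : ℕ → Ω → ℝ, (∀ n, g n ∈ U) → (fun ω => ⨅ n, g n ω) ∈ U := by
    intro g hg
    have hbdd : ∀ ω, BddBelow (Set.range fun n => g n ω) := fun ω =>
      ⟨-C, by rintro _ ⟨n, rfl⟩; exact hlb _ (hg n) ω⟩
    refine ⟨.iInf fun n => (hg n).1, fun ω => abs_le.2 ⟨le_ciInf fun n => hlb _ (hg n) ω,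
      (ciInf_le (hbdd ω) 0).trans (abs_le.1 ((hg 0).2.1 ω)).2⟩, ?_⟩
    filter_upwards [ae_all_iff.2 fun n => (hg n).2.2] with ω h using le_ciInf h
  obtain ⟨Y, hYU, hYmin⟩ := exists_mem_forall_integral_le ⟨_, hCU⟩ hint hbdd hlb hinf
  refine ⟨Y, hYU.1, ⟨C, ae_of_all _ hYU.2.1⟩, hYU.2.2, fun Z hZ hXZ => ?_⟩
  -- `min Y Z`, clipped at `-C` to stay in `U`, has no smaller integral than `Y`, so `Y ≤ Z` a.e.
  set W : Ω → ℝ := fun ω => max (min (Y ω) (Z ω)) (-C)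
  have hWY : ∀ ω, W ω ≤ Y ω := fun ω => max_le (min_le_left _ _) (hlb Y hYU ω)
  have hWU : W ∈ U := by
    refine ⟨(hYU.1.min hZ).max measurable_const, fun ω => abs_le.2 ⟨le_max_right _ _,
      (hWY ω).trans (abs_le.1 (hYU.2.1 ω)).2⟩, ?_⟩
    filter_upwards [hYU.2.2, hXZ] with ω h1 h2 using le_max_of_le_left (le_min h1 h2)
  have hWeq : W =ᵐ[P] Y := (integral_eq_iff_of_ae_le (hint W hWU) (hint Y hYU)
    (ae_of_all _ hWY)).1 ((integral_mono (hint W hWU) (hint Y hYU) hWY).antisymm (hYmin W hWU))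
  filter_upwards [hWeq, hXZ, hXC] with ω hω h1 h2
  rw [← hω]
  exact max_le (min_le_right _ _) (by linarith [neg_le_of_abs_le h2])

theorem exists_isCondEssInf [IsFiniteMeasure P] (hH : H ≤ F) (hX : EssBdd P X) :
    ∃ Y, IsCondEssInf P H X Y := by
  obtain ⟨Y, hY⟩ := exists_isCondEssSup hH hX.neg
  exact ⟨fun ω => -Y ω, by simpa only [IsCondEssInf, neg_neg] using hY⟩

end CondEssSup

section Portfolio

variable {Ω : Type*} (S θ : ℕ → Ω → ℝ) {t u T : ℕ}

lemma portfolioValue_of_le (h : T ≤ t) : PortfolioValue Ω S θ t T = 0 := by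
  funext ω
  simp [PortfolioValue, Finset.Ico_eq_empty_of_le h]

lemma portfolioValue_eq_add (h : t < T) (ω : Ω) :
    PortfolioValue Ω S θ t T ω =
      θ t ω * (S (t + 1) ω - S t ω) + PortfolioValue Ω S θ (t + 1) T ω :=
  Finset.sum_eq_sum_Ico_succ_bot h _

lemma portfolioValue_const_before (c : ℝ) (htu : t ≤ u) (huT : u ≤ T) :
    PortfolioValue Ω S (fun w _ => if w < u then c else 0) t T =
      fun ω => c * (S u ω - S t ω) := by
  funext ω
  rw [PortfolioValue, ← Finset.sum_Ico_consecutive _ htu huT,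
    Finset.sum_congr (s₁ := Finset.Ico t u) rfl fun w hw => by
      rw [if_pos (Finset.mem_Ico.1 hw).2],
    Finset.sum_eq_zero (s := Finset.Ico u T) fun w hw => by
      rw [if_neg (Finset.mem_Ico.1 hw).1.not_gt, zero_mul],
    add_zero, ← Finset.mul_sum, Finset.sum_Ico_sub (fun w => S w ω) htu]

end Portfolio

section OneStep

variable {Ω : Type*} {F : MeasurableSpace Ω} {P : @Measure Ω F} {H : MeasurableSpace Ω}
  {X x θ Y mX MX : Ω → ℝ}

lemma ae_nonpos_of_pos_of_le_mul_sub (hm : IsCondEssInf P H X mX) (hx : Measurable[H] x)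
    (hmx : ∀ᵐ ω ∂P, mX ω ≤ x ω) (hθ : Measurable[H] θ) (hY : Measurable[H] Y)
    (hle : ∀ᵐ ω ∂P, Y ω ≤ θ ω * (X ω - x ω)) : ∀ᵐ ω ∂P, 0 < θ ω → Y ω ≤ 0 := by
  -- on `{θ > 0}` the `H`-measurable `Y / θ + x` lies below `X`; elsewhere fall back to `mX`
  set Z : Ω → ℝ := fun ω => if 0 < θ ω then Y ω / θ ω + x ω else mX ω
  have hZ : Measurable[H] Z :=
    .ite (measurableSet_lt measurable_const hθ) ((hY.div hθ).add hx) hm.measurable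
  have hZX : ∀ᵐ ω ∂P, Z ω ≤ X ω := by
    filter_upwards [hle, hm.ae_le] with ω h1 h2
    simp only [Z]
    split_ifs with hpos
    · linarith [(div_le_iff₀ hpos).2 (h1.trans_eq (mul_comm _ _))]
    · exact h2
  filter_upwards [hm.ae_le_of_ae_le hZ hZX, hmx] with ω h1 h2 hpos
  simp only [Z, if_pos hpos] at h1
  simpa using (div_le_iff₀ hpos).1 (by linarith : Y ω / θ ω ≤ 0)

lemma ae_nonpos_of_le_mul_sub (hm : IsCondEssInf P H X mX) (hM : IsCondEssSup P H X MX)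
    (hx : Measurable[H] x) (hmx : ∀ᵐ ω ∂P, mX ω ≤ x ω ∧ x ω ≤ MX ω) (hθ : Measurable[H] θ)
    (hY : Measurable[H] Y) (hle : ∀ᵐ ω ∂P, Y ω ≤ θ ω * (X ω - x ω)) :
    ∀ᵐ ω ∂P, Y ω ≤ 0 := by
  have hpos := ae_nonpos_of_pos_of_le_mul_sub hm hx (hmx.mono fun _ h => h.1) hθ hY hle
  have hneg := ae_nonpos_of_pos_of_le_mul_sub (x := fun ω => -x ω) (θ := fun ω => -θ ω)
    hM.neg hx.neg (hmx.mono fun _ h => neg_le_neg h.2) hθ.neg hY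
    (hle.mono fun _ h => h.trans_eq (by ring))
  filter_upwards [hpos, hneg, hle] with ω h1 h2 h3
  rcases lt_trichotomy (θ ω) 0 with h | h | h
  · exact h2 (neg_pos.2 h)
  · simpa [h] using h3
  · exact h1 h

end OneStep

section AIP

variable {Ω : Type*} {F : MeasurableSpace Ω} {P : @Measure Ω F} {𝓕 : ℕ → MeasurableSpace Ω}
  {S : ℕ → Ω → ℝ} {T : ℕ}

lemma AIP.ae_condEssInf_mul_sub_nonpos (hA : AIP P 𝓕 S T) {t u : ℕ} (htu : t < u) (huT : u ≤ T)
    (c : ℝ) {mv : Ω → ℝ} (hmv : IsCondEssInf P (𝓕 t) (fun ω => c * (S u ω - S t ω)) mv) :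
    ∀ᵐ ω ∂P, mv ω ≤ 0 := by
  refine hA t (htu.trans_le huT) (fun w _ => if w < u then c else 0) (fun w => ?_) mv ?_
  · exact ⟨measurable_const, ⟨|c|, ae_of_all _ fun _ => by dsimp only; split_ifs <;> simp⟩⟩
  · rwa [portfolioValue_const_before S c htu.le huT]

lemma AIP.condEssInf_le_le_condEssSup (hA : AIP P 𝓕 S T)
    (hSmeas : ∀ t, Measurable[𝓕 t] (S t)) (hSbdd : ∀ t, EssBdd P (S t))
    (t u : ℕ) (htu : t ≤ u) (huT : u ≤ T) (mS MS : Ω → ℝ)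
    (hmS : IsCondEssInf P (𝓕 t) (S u) mS) (hMS : IsCondEssSup P (𝓕 t) (S u) MS) :
    ∀ᵐ ω ∂P, mS ω ≤ S t ω ∧ S t ω ≤ MS ω := by
  rcases htu.eq_or_lt with rfl | htu
  · exact hmS.ae_le.and hMS.2.2.1
  have hlow := hA.ae_condEssInf_mul_sub_nonpos htu huT 1 (mv := fun ω => mS ω + -S t ω) <| by
    convert hmS.add_right (g := fun ω => -S t ω) (hSmeas t).neg (hSbdd t).neg using 2 with ω
    ring
  have hup := hA.ae_condEssInf_mul_sub_nonpos htu huT (-1) (mv := fun ω => -MS ω + S t ω) <| by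
    convert hMS.neg.add_right (hSmeas t) (hSbdd t) using 2 with ω
    ring
  filter_upwards [hlow, hup] with ω h1 h2
  constructor <;> linarith

lemma ae_nonpos_of_ae_le_portfolioValue [IsFiniteMeasure P] (h𝓕mono : Monotone 𝓕)
    (h𝓕le : ∀ t, 𝓕 t ≤ F) (hSmeas : ∀ t, Measurable[𝓕 t] (S t)) (hSbdd : ∀ t, EssBdd P (S t))
    (hS : ∀ t, t < T → ∀ mS MS : Ω → ℝ,
      IsCondEssInf P (𝓕 t) (S (t + 1)) mS → IsCondEssSup P (𝓕 t) (S (t + 1)) MS →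
      ∀ᵐ ω ∂P, mS ω ≤ S t ω ∧ S t ω ≤ MS ω)
    {θ : ℕ → Ω → ℝ} (hθ : ∀ u, Measurable[𝓕 u] (θ u)) (t : ℕ) {Y : Ω → ℝ}
    (hY : Measurable[𝓕 t] Y) (hle : ∀ᵐ ω ∂P, Y ω ≤ PortfolioValue Ω S θ t T ω) :
    ∀ᵐ ω ∂P, Y ω ≤ 0 := by
  rcases lt_or_ge t T with ht | ht
  · obtain ⟨mS, hmS⟩ := exists_isCondEssInf (h𝓕le t) (hSbdd (t + 1))
    obtain ⟨MS, hMS⟩ := exists_isCondEssSup (h𝓕le t) (hSbdd (t + 1))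
    have hmono := h𝓕mono t.le_succ
    have hrest := ae_nonpos_of_ae_le_portfolioValue h𝓕mono h𝓕le hSmeas hSbdd hS hθ (t + 1)
      (Y := fun ω => Y ω - θ t ω * (S (t + 1) ω - S t ω))
      ((hY.mono hmono le_rfl).sub (((hθ t).mono hmono le_rfl).mul
        ((hSmeas (t + 1)).sub ((hSmeas t).mono hmono le_rfl))))
      (hle.mono fun ω h => by rw [portfolioValue_eq_add S θ ht] at h; linarith)
    exact ae_nonpos_of_le_mul_sub hmS hMS (hSmeas t) (hS t ht mS MS hmS hMS) (hθ t) hY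
      (hrest.mono fun ω h => by linarith)
  · simpa [portfolioValue_of_le S θ ht] using hle
termination_by T - t

lemma aip_of_condEssInf_le_le_condEssSup [IsFiniteMeasure P] (h𝓕mono : Monotone 𝓕)
    (h𝓕le : ∀ t, 𝓕 t ≤ F) (hSmeas : ∀ t, Measurable[𝓕 t] (S t)) (hSbdd : ∀ t, EssBdd P (S t))
    (hS : ∀ t, t < T → ∀ mS MS : Ω → ℝ,
      IsCondEssInf P (𝓕 t) (S (t + 1)) mS → IsCondEssSup P (𝓕 t) (S (t + 1)) MS →
      ∀ᵐ ω ∂P, mS ω ≤ S t ω ∧ S t ω ≤ MS ω) :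
    AIP P 𝓕 S T := fun t _ _ hθ _ hmv =>
  ae_nonpos_of_ae_le_portfolioValue h𝓕mono h𝓕le hSmeas hSbdd hS (fun u => (hθ u).1) t
    hmv.measurable hmv.ae_le

end AIP

theorem aip_iff_condEssInf_le_le_condEssSup_general {Ω : Type*} [F : MeasurableSpace Ω]
    (P : Measure Ω) [IsProbabilityMeasure P] (T : ℕ)
    (𝓕 : ℕ → MeasurableSpace Ω) (h𝓕mono : Monotone 𝓕) (h𝓕le : ∀ t, 𝓕 t ≤ F)
    (S : ℕ → Ω → ℝ) (hSmeas : ∀ t, Measurable[𝓕 t] (S t))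
    (hSbdd : ∀ t, EssBdd P (S t)) :
    (AIP P 𝓕 S T ↔
      ∀ t, t < T → ∀ mS MS : Ω → ℝ,
        IsCondEssInf P (𝓕 t) (S (t + 1)) mS → IsCondEssSup P (𝓕 t) (S (t + 1)) MS →
        ∀ᵐ ω ∂P, mS ω ≤ S t ω ∧ S t ω ≤ MS ω) ∧
    (AIP P 𝓕 S T ↔
      ∀ t u, t ≤ u → u ≤ T → ∀ mS MS : Ω → ℝ,
        IsCondEssInf P (𝓕 t) (S u) mS → IsCondEssSup P (𝓕 t) (S u) MS →
        ∀ᵐ ω ∂P, mS ω ≤ S t ω ∧ S t ω ≤ MS ω) := by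
  have of_aip := fun hA : AIP P 𝓕 S T => hA.condEssInf_le_le_condEssSup hSmeas hSbdd
  have to_aip := aip_of_condEssInf_le_le_condEssSup (T := T) h𝓕mono h𝓕le hSmeas hSbdd
  exact ⟨⟨fun hA t ht => of_aip hA t (t + 1) t.le_succ ht, to_aip⟩,
    ⟨of_aip, fun h => to_aip fun t ht => h t (t + 1) t.le_succ ht⟩⟩

/-- Characterization of AIP: the market satisfies AIP iff
`m(S_{t+1}|𝓕_t) ≤ S_t ≤ M(S_{t+1}|𝓕_t)` a.s. for all `t < T`, and this is also equivalent to
`m(S_u|𝓕_t) ≤ S_t ≤ M(S_u|𝓕_t)` a.s. for all `t ≤ u ≤ T`. -/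
theorem aip_iff_condEssInf_le_le_condEssSup {Ω : Type*} [F : MeasurableSpace Ω]
    (P : Measure Ω) [IsProbabilityMeasure P] (T : ℕ)
    (𝓕 : ℕ → MeasurableSpace Ω) (h𝓕mono : Monotone 𝓕) (h𝓕le : ∀ t, 𝓕 t ≤ F)
    (S : ℕ → Ω → ℝ) (hSmeas : ∀ t, Measurable[𝓕 t] (S t))
    (hSbdd : ∀ t, EssBdd P (S t)) (hSnonneg : ∀ t, ∀ᵐ ω ∂P, 0 ≤ S t ω) :
    (AIP P 𝓕 S T ↔
      ∀ t, t < T → ∀ mS MS : Ω → ℝ,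
        IsCondEssInf P (𝓕 t) (S (t + 1)) mS → IsCondEssSup P (𝓕 t) (S (t + 1)) MS →
        ∀ᵐ ω ∂P, mS ω ≤ S t ω ∧ S t ω ≤ MS ω) ∧
    (AIP P 𝓕 S T ↔
      ∀ t u, t ≤ u → u ≤ T → ∀ mS MS : Ω → ℝ,
        IsCondEssInf P (𝓕 t) (S u) mS → IsCondEssSup P (𝓕 t) (S u) MS →
        ∀ᵐ ω ∂P, mS ω ≤ S t ω ∧ S t ω ≤ MS ω) :=
  aip_iff_condEssInf_le_le_condEssSup_general (F := F) P T 𝓕 h𝓕mono h𝓕le S hSmeas hSbdd
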